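/- Let x ∈ C⟦0,t⟧ with K = min_{0 ≤ j ≤ t} x j, and suppose x = T_g(s) for some path s ∈ C⟦0,t⟧ and nonnegative integer g, where T_g(s)_j = 2*(max_{0 ≤ i ≤ j} s i - g)_+ - s j. Then g ≥ -K. Moreover, if g > -K then s = -x, and if g = -K then s = s^r(x) for some integer r with K ≤ r ≤ x_t (where s^r is defined via the backward running minima of x as s^r_j = 2*(min(r, min_{j ≤ i ≤ t} x i) - K) - x j). -/
import Mathlib


/-- Running maximum `max_{0 ≤ i ≤ j} s i`. -/
noncomputable def runMax (s : ℕ → ℤ) (j : ℕ) : ℤ :=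
  (Finset.range (j + 1)).sup' (Finset.nonempty_range_iff.mpr (Nat.succ_ne_zero j)) s

/-- Backward running minimum `K_j(x) = min_{j ≤ i ≤ t} x i` (for `j ≤ t`). -/
noncomputable def backMin (x : ℕ → ℤ) (t j : ℕ) : ℤ :=
  (Finset.Icc (min j t) t).inf' (Finset.nonempty_Icc.mpr (min_le_right j t)) x

/-- `x ∈ C⟦0,t⟧`: `x 0 = 0` and steps in `{-1,0,1}` up to time `t`. -/
def IsPath (t : ℕ) (x : ℕ → ℤ) : Prop :=
  x 0 = 0 ∧ ∀ j : ℕ, 1 ≤ j → j ≤ t → x j - x (j - 1) ∈ ({-1, 0, 1} : Set ℤ)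

/-- `T_g(s)_j = 2*(max_{0 ≤ i ≤ j} s i - g)₊ - s j`. -/
noncomputable def Tmap (g : ℕ) (s : ℕ → ℤ) (j : ℕ) : ℤ :=
  2 * max (runMax s j - (g : ℤ)) 0 - s j

/-- The path `s^r_j = 2*(min(r, K_j(x)) - K) - x j`, where `K = K_0(x)`. -/
noncomputable def sr (x : ℕ → ℤ) (t : ℕ) (r : ℤ) (j : ℕ) : ℤ :=
  2 * (min r (backMin x t j) - backMin x t 0) - x j

lemma le_runMax (s : ℕ → ℤ) {i j : ℕ} (h : i ≤ j) : s i ≤ runMax s j :=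
  Finset.le_sup' s (Finset.mem_range.mpr (Nat.lt_succ_of_le h))

lemma runMax_exists (s : ℕ → ℤ) (j : ℕ) : ∃ i ≤ j, runMax s j = s i := by
  obtain ⟨i, hi, h⟩ := Finset.exists_mem_eq_sup'
    (Finset.nonempty_range_iff.mpr (Nat.succ_ne_zero j)) s
  exact ⟨i, Nat.lt_succ_iff.mp (Finset.mem_range.mp hi), h⟩

lemma runMax_mono (s : ℕ → ℤ) {j k : ℕ} (h : j ≤ k) : runMax s j ≤ runMax s k := by
  refine Finset.sup'_le _ _ fun i hi => ?_
  exact le_runMax s (le_trans (Nat.lt_succ_iff.mp (Finset.mem_range.mp hi)) h)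

lemma backMin_le (x : ℕ → ℤ) {t j i : ℕ} (hji : j ≤ i) (hit : i ≤ t) :
    backMin x t j ≤ x i :=
  Finset.inf'_le x (Finset.mem_Icc.mpr ⟨le_trans (min_le_left j t) hji, hit⟩)

lemma backMin_exists (x : ℕ → ℤ) (t j : ℕ) : ∃ i, min j t ≤ i ∧ i ≤ t ∧ backMin x t j = x i := by
  obtain ⟨i, hi, h⟩ := Finset.exists_mem_eq_inf'
    (Finset.nonempty_Icc.mpr (min_le_right j t)) x
  exact ⟨i, (Finset.mem_Icc.mp hi).1, (Finset.mem_Icc.mp hi).2, h⟩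

lemma le_backMin (x : ℕ → ℤ) (t j : ℕ) {c : ℤ} (h : ∀ i, min j t ≤ i → i ≤ t → c ≤ x i) :
    c ≤ backMin x t j :=
  Finset.le_inf' _ x fun i hi => h i (Finset.mem_Icc.mp hi).1 (Finset.mem_Icc.mp hi).2

lemma backMin_zero_le (x : ℕ → ℤ) (t j : ℕ) : backMin x t 0 ≤ backMin x t j := by
  refine le_backMin x t j fun i _ hi => backMin_le x (Nat.zero_le i) hi

/-- Discrete intermediate value: a path whose running max exceeds `v` after being at most `v`
at time `j` must hit value `v` exactly, with running max exactly `v` there. -/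
lemma exists_hit {t : ℕ} {s : ℕ → ℤ} (hs : IsPath t s) {j : ℕ} (hj : j ≤ t) {v : ℤ}
    (h1 : runMax s j ≤ v) (h2 : v < runMax s t) :
    ∃ i, j ≤ i ∧ i ≤ t ∧ s i = v ∧ runMax s i = v := by
  obtain ⟨i₀, hi₀t, hi₀⟩ := runMax_exists s t
  have hP : ∃ n, n ≤ t ∧ v < s n := ⟨i₀, hi₀t, hi₀ ▸ h2⟩
  classical
  set m := Nat.find hP with hm
  obtain ⟨hmt, hmv⟩ : m ≤ t ∧ v < s m := Nat.find_spec hP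
  have hmin : ∀ k, k < m → k ≤ t → s k ≤ v := by
    intro k hk hkt
    by_contra hc
    exact (Nat.find_min hP hk) ⟨hkt, lt_of_not_ge hc⟩
  have hjm : j < m := by
    by_contra hc
    push_neg at hc
    exact absurd (le_trans (le_runMax s hc) h1) (not_le.mpr hmv)
  have hm1 : 1 ≤ m := Nat.one_le_iff_ne_zero.mpr (by omega)
  have hstep := hs.2 m hm1 hmt
  simp only [Set.mem_insert_iff, Set.mem_singleton_iff] at hstep
  have hprev_le : s (m - 1) ≤ v := hmin (m - 1) (by omega) (by omega)
  have hprev_ge : v ≤ s (m - 1) := by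
    rcases hstep with h | h | h <;> omega
  have hsv : s (m - 1) = v := le_antisymm hprev_le hprev_ge
  refine ⟨m - 1, by omega, by omega, hsv, ?_⟩
  refine le_antisymm ?_ (hsv ▸ le_runMax s le_rfl)
  refine Finset.sup'_le _ _ fun i hi => ?_
  have hi' : i ≤ m - 1 := Nat.lt_succ_iff.mp (Finset.mem_range.mp hi)
  exact hmin i (by omega) (by omega)

/-- If `x ∈ C⟦0,t⟧` equals `T_g(s)` for a path `s ∈ C⟦0,t⟧` and `g ∈ ℕ`, then `g ≥ -K`;
if `g > -K` then `s = -x`, and if `g = -K` then `s = s^r(x)` for some `K ≤ r ≤ x t`. -/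
theorem Tmap_preimage_cases (t : ℕ) (x s : ℕ → ℤ) (hx : IsPath t x) (hs : IsPath t s)
    (g : ℕ) (heq : ∀ j ≤ t, x j = Tmap g s j) :
    (-(backMin x t 0) ≤ (g : ℤ)) ∧
    (-(backMin x t 0) < (g : ℤ) → ∀ j ≤ t, s j = -x j) ∧
    ((g : ℤ) = -(backMin x t 0) →
      ∃ r : ℤ, backMin x t 0 ≤ r ∧ r ≤ x t ∧ ∀ j ≤ t, s j = sr x t r j) := by
  have hs0 : s 0 = 0 := hs.1
  have hM0 : ∀ j, 0 ≤ runMax s j := fun j => hs0 ▸ le_runMax s (Nat.zero_le j)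
  have hsM : ∀ j, s j ≤ runMax s j := fun j => le_runMax s le_rfl
  -- pointwise lower bound x j ≥ -g
  have hlow : ∀ j ≤ t, -(g : ℤ) ≤ x j := by
    intro j hj
    rw [heq j hj]
    unfold Tmap
    rcases le_or_gt (runMax s j) (g : ℤ) with h | h
    · have : max (runMax s j - (g : ℤ)) 0 = 0 := max_eq_right (by linarith)
      rw [this]
      have := hsM j
      linarith
    · have : max (runMax s j - (g : ℤ)) 0 = runMax s j - (g : ℤ) :=
        max_eq_left (by linarith)
      rw [this]
      have := hsM j
      linarith
  have hKlow : -(g : ℤ) ≤ backMin x t 0 := by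
    obtain ⟨i, _, hit, hKi⟩ := backMin_exists x t 0
    rw [hKi]; exact hlow i hit
  rcases le_or_gt (runMax s t) (g : ℤ) with hA | hB
  · -- Case A : running max never exceeds g, so x = -s on [0,t]
    have hxs : ∀ j ≤ t, x j = -s j := by
      intro j hj
      rw [heq j hj]
      unfold Tmap
      have : max (runMax s j - (g : ℤ)) 0 = 0 :=
        max_eq_right (by have := runMax_mono s hj; linarith)
      rw [this]; ring
    have hK : backMin x t 0 = -runMax s t := by
      obtain ⟨i₀, hi₀t, hi₀⟩ := runMax_exists s t
      apply le_antisymm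
      · calc backMin x t 0 ≤ x i₀ := backMin_le x (Nat.zero_le _) hi₀t
          _ = -s i₀ := hxs i₀ hi₀t
          _ = -runMax s t := by rw [hi₀]
      · refine le_backMin x t 0 fun i _ hi => ?_
        rw [hxs i hi]
        have := le_runMax s hi
        linarith
    refine ⟨by rw [hK, neg_neg]; exact hA, ?_, ?_⟩
    · intro _ j hj
      have := hxs j hj; linarith
    · intro hgK
      refine ⟨backMin x t 0, le_refl _, backMin_le x (Nat.zero_le t) le_rfl, ?_⟩
      intro j hj
      unfold sr
      have : min (backMin x t 0) (backMin x t j) = backMin x t 0 :=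
        min_eq_left (backMin_zero_le x t j)
      rw [this]
      have := hxs j hj
      linarith
  · -- Case B : running max exceeds g; then K = -g
    have hK : backMin x t 0 = -(g : ℤ) := by
      refine le_antisymm ?_ hKlow
      have h0 : runMax s 0 = 0 := by unfold runMax; simp [hs0]
      obtain ⟨i, _, hit, hsi, hMi⟩ := exists_hit hs (Nat.zero_le t)
        (by rw [h0]; positivity) hB
      calc backMin x t 0 ≤ x i := backMin_le x (Nat.zero_le _) hit
        _ = -(g : ℤ) := by
            rw [heq i hit]; unfold Tmap; rw [hMi, hsi]; norm_num
    refine ⟨by rw [hK]; simp, ?_, ?_⟩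
    · intro hlt; rw [hK] at hlt; simp at hlt
    · intro _
      refine ⟨runMax s t - 2 * g, ?_, ?_, ?_⟩
      · rw [hK]; linarith
      · rw [heq t le_rfl]
        unfold Tmap
        rw [max_eq_left (by linarith)]
        have := hsM t
        linarith
      · intro j hj
        unfold sr
        rw [hK]
        -- key claim : min (runMax s t - 2g) (backMin x t j) = max (runMax s j) g - 2g
        have key : min (runMax s t - 2 * (g : ℤ)) (backMin x t j)
            = max (runMax s j) (g : ℤ) - 2 * g := by
          have hBj : max (runMax s j) (g : ℤ) - 2 * g ≤ backMin x t j := by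
            refine le_backMin x t j fun i hi hit => ?_
            have hji : j ≤ i := le_trans (le_of_eq (min_eq_left hj).symm) hi
            rw [heq i hit]
            unfold Tmap
            have hMji := runMax_mono s hji
            have hsMi := hsM i
            rcases le_or_gt (runMax s i) (g : ℤ) with h | h
            · have e1 : max (runMax s i - (g : ℤ)) 0 = 0 := max_eq_right (by linarith)
              have e2 : max (runMax s j) (g : ℤ) = g := max_eq_right (by linarith)
              rw [e1, e2]; linarith
            · have e1 : max (runMax s i - (g : ℤ)) 0 = runMax s i - g :=
                max_eq_left (by linarith)
              have h1 : max (runMax s j) (g : ℤ) ≤ runMax s i :=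
                max_le hMji (le_of_lt h)
              rw [e1]; linarith
          rcases le_or_gt (runMax s t) (max (runMax s j) (g : ℤ)) with h | h
          · have hNt : max (runMax s j) (g : ℤ) = runMax s t :=
              le_antisymm (max_le (runMax_mono s hj) (le_of_lt hB)) h
            rw [hNt] at hBj ⊢
            exact min_eq_left hBj
          · obtain ⟨i, hji, hit, hsi, hMi⟩ := exists_hit hs hj (le_max_left _ _) h
            have hxi : x i = max (runMax s j) (g : ℤ) - 2 * g := by
              rw [heq i hit]
              unfold Tmap
              rw [hMi, hsi, max_eq_left (by have := le_max_right (runMax s j) (g:ℤ); linarith)]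
              ring
            have hBj' : backMin x t j ≤ max (runMax s j) (g : ℤ) - 2 * g := by
              calc backMin x t j ≤ x i := backMin_le x hji hit
                _ = _ := hxi
            have hBeq : backMin x t j = max (runMax s j) (g : ℤ) - 2 * g :=
              le_antisymm hBj' hBj
            rw [hBeq]
            exact min_eq_right (by linarith)
        rw [key, heq j hj]
        unfold Tmap
        rcases le_or_gt (runMax s j) (g : ℤ) with h | h
        · have e1 : max (runMax s j) (g : ℤ) = g := max_eq_right (by linarith)
          have e2 : max (runMax s j - (g : ℤ)) 0 = 0 := max_eq_right (by linarith)
          rw [e1, e2]; ring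
        · have e1 : max (runMax s j) (g : ℤ) = runMax s j := max_eq_left (by linarith)
          have e2 : max (runMax s j - (g : ℤ)) 0 = runMax s j - g :=
            max_eq_left (by linarith)
          rw [e1, e2]; ring
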